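/- arXiv:0812.3644 — 5 statements merged into one kernel-verified Lean document; each statement's English description precedes it below -/
import Mathlib

section
/- Let n ≥ 3 and let v₃ be the cubic Volterra structure matrix on ℝ^n with coordinates (a₁,…,a_n), whose only nonzero entries above the diagonal are (v₃)_{i,i+1}(a) = a_i a_{i+1}(a_i + a_{i+1}) for i = 1,…,n−1 and (v₃)_{i,i+2}(a) = a_i a_{i+1} a_{i+2} for i = 1,…,n−2, extended by skew-symmetry. Then v₃ satisfies the Jacobi identity: for all indices i, j, k, Σ_{l=1}^{n} ( (v₃)_{li} ∂(v₃)_{jk}/∂a_l + (v₃)_{lj} ∂(v₃)_{ki}/∂a_l + (v₃)_{lk} ∂(v₃)_{ij}/∂a_l ) = 0 identically on ℝ^n. -/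
/-!
The sum `∑ l, π_{li} ∂_l π_{jk}` is the derivative of `π_{jk}` in the direction of the `i`-th
column of `π`, so for the polynomial entries of `v₃` the Jacobiator is an explicit polynomial.
For a skew-symmetric `π` the Jacobiator is alternating in `(i, j, k)`, so it suffices to treat
`i < j < k`. The entries of `v₃` only couple indices at distance at most two, so the computation
is local: extending the coordinates by zero to `ℕ`, it becomes an identity for arbitrary sequences
that reduces to the cases `j - i, k - j ∈ {1, 2, ≥ 3}`.
-/

open Real

/-- Partial derivative `∂f/∂x_l` at `x`. -/
noncomputable def pd {n : ℕ} (f : (Fin n → ℝ) → ℝ) (x : Fin n → ℝ) (l : Fin n) : ℝ :=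
  fderiv ℝ f x (Pi.single l 1)

/-- The cubic Volterra structure matrix on `ℝ^n`: its only nonzero entries above
the diagonal are `(v₃)_{i,i+1} = a_i a_{i+1}(a_i + a_{i+1})` and
`(v₃)_{i,i+2} = a_i a_{i+1} a_{i+2}`, extended by skew-symmetry. -/
def v3 (n : ℕ) (a : Fin n → ℝ) : Matrix (Fin n) (Fin n) ℝ :=
  fun i j =>
    let e : Fin n → Fin n → ℝ := fun i j =>
      if j.val = i.val + 1 then a i * a j * (a i + a j)
      else if h : j.val = i.val + 2 then
        a i * a ⟨i.val + 1, by have := j.isLt; omega⟩ * a j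
      else 0
    if i.val < j.val then e i j
    else if j.val < i.val then -(e j i)
    else 0

open Finset
open scoped Matrix

section Jacobiator

variable {n : ℕ}

noncomputable def jacobiator (P : (Fin n → ℝ) → Matrix (Fin n) (Fin n) ℝ)
    (x : Fin n → ℝ) (i j k : Fin n) : ℝ :=
  ∑ l : Fin n,
    (P x l i * pd (fun y => P y j k) x l
      + P x l j * pd (fun y => P y k i) x l
      + P x l k * pd (fun y => P y i j) x l)

theorem pd_neg (f : (Fin n → ℝ) → ℝ) (x : Fin n → ℝ) (l : Fin n) :
    pd (fun y => -f y) x l = -pd f x l := by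
  simp [pd, fderiv_fun_neg]

theorem sum_mul_pd_of_hasFDerivAt {f : (Fin n → ℝ) → ℝ} {f' : (Fin n → ℝ) →L[ℝ] ℝ}
    {x : Fin n → ℝ} (hf : HasFDerivAt f f' x) (w : Fin n → ℝ) :
    ∑ l, w l * pd f x l = f' w := by
  conv_rhs => rw [pi_eq_sum_univ' w]
  simp [pd, hf.fderiv, map_sum, map_smul]

variable {P : (Fin n → ℝ) → Matrix (Fin n) (Fin n) ℝ}

theorem jacobiator_rotate (x : Fin n → ℝ) (i j k : Fin n) :
    jacobiator P x i j k = jacobiator P x j k i :=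
  sum_congr rfl fun _ _ => by ring

theorem jacobiator_swap (hP : ∀ y, (P y)ᵀ = -P y) (x : Fin n → ℝ) (i j k : Fin n) :
    jacobiator P x i k j = -jacobiator P x i j k := by
  have hswap : ∀ a b, (fun y => P y a b) = fun y => -P y b a := fun a b =>
    funext fun y => by simpa using congrFun (congrFun (hP y) b) a
  simp only [jacobiator, ← sum_neg_distrib]
  refine sum_congr rfl fun l _ => ?_
  rw [hswap k j, hswap j i, hswap i k, pd_neg, pd_neg, pd_neg]
  ring

theorem jacobiator_eq_zero_of_lt (hP : ∀ y, (P y)ᵀ = -P y) (x : Fin n → ℝ)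
    (h : ∀ i j k : Fin n, i < j → j < k → jacobiator P x i j k = 0) (i j k : Fin n) :
    jacobiator P x i j k = 0 := by
  have swap₂₃ := jacobiator_swap hP x
  have swap₁₂ : ∀ a b c, jacobiator P x b a c = -jacobiator P x a b c := fun a b c => by
    rw [jacobiator_rotate, swap₂₃, ← jacobiator_rotate]
  have diag : ∀ a b, jacobiator P x a b b = 0 := fun a b => by linarith [swap₂₃ a b b]
  wlog hij : i < j generalizing i j k
  · rcases (not_lt.1 hij).eq_or_lt with rfl | hji
    · exact (jacobiator_rotate x j j k).trans ((jacobiator_rotate x j k j).trans (diag k j))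
    · rw [swap₁₂, this j i k hji, neg_zero]
  rcases lt_trichotomy j k with hjk | rfl | hkj
  · exact h i j k hij hjk
  · exact diag i j
  rcases lt_trichotomy i k with hik | rfl | hki
  · rw [swap₂₃, h i k j hik hkj, neg_zero]
  · exact (jacobiator_rotate x i j i).trans (diag j i)
  · rw [← jacobiator_rotate, h k i j hki hij]

end Jacobiator

namespace Volterra

variable {R : Type*} [CommRing R]

def upper (a : ℕ → R) (p q : ℕ) : R :=
  if q = p + 1 then a p * a q * (a p + a q)
  else if q = p + 2 then a p * a (p + 1) * a q
  else 0

/-- The derivative of `upper · p q` at `a` in the direction `w`. -/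
def upperDeriv (a w : ℕ → R) (p q : ℕ) : R :=
  if q = p + 1 then (w p * a q + a p * w q) * (a p + a q) + a p * a q * (w p + w q)
  else if q = p + 2 then w p * a (p + 1) * a q + a p * w (p + 1) * a q + a p * a (p + 1) * w q
  else 0

def entry (a : ℕ → R) (p q : ℕ) : R :=
  if p < q then upper a p q else if q < p then -upper a q p else 0

theorem entry_swap (a : ℕ → R) (p q : ℕ) : entry a p q = -entry a q p := by
  unfold entry
  rcases lt_trichotomy p q with h | rfl | h
  · simp [h, h.not_gt]
  · simp
  · simp [h, h.not_gt]

theorem upper_eq_zero_of_right {a : ℕ → R} {q : ℕ} (hq : a q = 0) (p : ℕ) :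
    upper a p q = 0 := by
  simp [upper, hq]

theorem upperDeriv_jacobi (a : ℕ → R) {i j k : ℕ} (hij : i < j) (hjk : j < k) :
    upperDeriv a (entry a · i) j k - upperDeriv a (entry a · j) i k
      + upperDeriv a (entry a · k) i j = 0 := by
  obtain ⟨d, rfl⟩ := Nat.exists_eq_add_of_lt hij
  obtain ⟨e, rfl⟩ := Nat.exists_eq_add_of_lt hjk
  rcases d with _ | _ | d <;> rcases e with _ | _ | e <;>
    simp +arith [upperDeriv, entry, upper] <;> ring

end Volterra

open Volterra

noncomputable def zeroExtend (n m : ℕ) : (Fin n → ℝ) →L[ℝ] ℝ :=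
  if h : m < n then ContinuousLinearMap.proj ⟨m, h⟩ else 0

section CubicVolterra

variable {n : ℕ}

theorem zeroExtend_of_lt (y : Fin n → ℝ) {m : ℕ} (h : m < n) :
    zeroExtend n m y = y ⟨m, h⟩ := by
  simp [zeroExtend, h]

theorem zeroExtend_of_le (y : Fin n → ℝ) {m : ℕ} (h : n ≤ m) : zeroExtend n m y = 0 := by
  simp [zeroExtend, h.not_gt]

theorem v3_eq_entry (y : Fin n → ℝ) (p q : Fin n) :
    v3 n y p q = entry (zeroExtend n · y) p q := by
  simp only [v3, entry, upper]
  split_ifs <;> first | omega | simp (disch := omega) [zeroExtend_of_lt]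

theorem v3_transpose (y : Fin n → ℝ) : (v3 n y)ᵀ = -v3 n y := by
  ext p q
  rw [Matrix.transpose_apply, Matrix.neg_apply, v3_eq_entry, v3_eq_entry, entry_swap]

theorem v3_of_lt (y : Fin n → ℝ) {p q : Fin n} (h : p < q) :
    v3 n y p q = upper (zeroExtend n · y) p q := by
  rw [v3_eq_entry, entry, if_pos (Fin.lt_def.1 h)]

theorem zeroExtend_column (y : Fin n → ℝ) (i : Fin n) (m : ℕ) :
    zeroExtend n m (fun l => v3 n y l i) = entry (zeroExtend n · y) m i := by
  by_cases hm : m < n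
  · rw [zeroExtend_of_lt _ hm, v3_eq_entry]
  · have hm : n ≤ m := not_lt.1 hm
    rw [zeroExtend_of_le _ hm, entry_swap, entry, if_pos (by omega),
      upper_eq_zero_of_right (zeroExtend_of_le y hm), neg_zero]

theorem sum_mul_pd_upper (x w : Fin n → ℝ) (p q : ℕ) :
    ∑ l, w l * pd (fun y => upper (zeroExtend n · y) p q) x l
      = upperDeriv (zeroExtend n · x) (zeroExtend n · w) p q := by
  have c : ∀ m, HasFDerivAt (fun y => zeroExtend n m y) (zeroExtend n m) x :=
    fun m => (zeroExtend n m).hasFDerivAt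
  unfold upper upperDeriv
  by_cases h1 : q = p + 1
  · simp only [if_pos h1]
    rw [sum_mul_pd_of_hasFDerivAt (((c p).fun_mul (c q)).fun_mul ((c p).fun_add (c q)))]
    simp only [smul_add, add_apply, smul_apply, smul_eq_mul]
    ring
  by_cases h2 : q = p + 2
  · simp only [if_neg h1, if_pos h2]
    rw [sum_mul_pd_of_hasFDerivAt (((c p).fun_mul (c (p + 1))).fun_mul (c q))]
    simp only [smul_add, add_apply, smul_apply, smul_eq_mul]
    ring
  · simp only [if_neg h1, if_neg h2]
    rw [sum_mul_pd_of_hasFDerivAt (hasFDerivAt_const 0 x)]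
    simp

theorem sum_column_mul_pd_upper (x : Fin n → ℝ) (i : Fin n) (p q : ℕ) :
    ∑ l, v3 n x l i * pd (fun y => upper (zeroExtend n · y) p q) x l
      = upperDeriv (zeroExtend n · x) (entry (zeroExtend n · x) · i) p q := by
  rw [sum_mul_pd_upper, funext (zeroExtend_column x i)]

theorem jacobiator_v3_of_lt (x : Fin n → ℝ) {i j k : Fin n} (hij : i < j) (hjk : j < k) :
    jacobiator (v3 n) x i j k = 0 := by
  have hki : (fun y => v3 n y k i) = fun y => -upper (zeroExtend n · y) i k := funext fun y => by
    rw [v3_eq_entry, entry_swap, ← v3_eq_entry, v3_of_lt y (hij.trans hjk)]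
  simp only [jacobiator, sum_add_distrib, hki, pd_neg, mul_neg, sum_neg_distrib,
    v3_of_lt _ hij, v3_of_lt _ hjk, sum_column_mul_pd_upper]
  rw [← sub_eq_add_neg]
  exact upperDeriv_jacobi _ hij hjk

end CubicVolterra

theorem stmt3_general (n : ℕ) :
    ∀ (x : Fin n → ℝ) (i j k : Fin n),
      ∑ l : Fin n,
        (v3 n x l i * pd (fun y => v3 n y j k) x l
          + v3 n x l j * pd (fun y => v3 n y k i) x l
          + v3 n x l k * pd (fun y => v3 n y i j) x l) = 0 :=
  fun x => jacobiator_eq_zero_of_lt v3_transpose x fun _ _ _ => jacobiator_v3_of_lt x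

/-- The cubic Volterra bracket satisfies the Jacobi identity. -/
theorem stmt3 (n : ℕ) (hn : 3 ≤ n) :
    ∀ (x : Fin n → ℝ) (i j k : Fin n),
      ∑ l : Fin n,
        (v3 n x l i * pd (fun y => v3 n y j k) x l
          + v3 n x l j * pd (fun y => v3 n y k i) x l
          + v3 n x l k * pd (fun y => v3 n y i j) x l) = 0 :=
  stmt3_general n
end

section
/- Let N ≥ 2 and let q : ℝ → ℝ^N be a differentiable curve satisfying q̇_i(t) = −e^{q_{i-1}(t) − q_i(t)} − e^{q_i(t) − q_{i+1}(t)} for i = 1,…,N (with the convention that the term e^{q_0 − q_1} is omitted when i = 1 and the term e^{q_N − q_{N+1}} is omitted when i = N). Define a_i(t) = e^{q_i(t) − q_{i+1}(t)} for i = 1,…,N−1. Then a satisfies the Volterra (KM) system: ȧ_i = a_i (a_{i+1} − a_{i-1}) for i = 1,…,N−1, where by convention a₀ = a_N = 0. -/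
open Real

/-- One-based exponential term: `Eterm N q m = e^{q_m - q_{m+1}}` for `1 ≤ m ≤ N-1`,
and `0` (the term is omitted) otherwise. -/
noncomputable def Eterm (N : ℕ) (q : Fin N → ℝ) (m : ℕ) : ℝ :=
  if h : 1 ≤ m ∧ m < N then Real.exp (q ⟨m - 1, by omega⟩ - q ⟨m, by omega⟩) else 0

/-- One-based access to `a ∈ ℝ^n`, extended by zero: `ext1 n a m = a_m` for
`1 ≤ m ≤ n` and `0` otherwise. -/
def ext1 (n : ℕ) (a : Fin n → ℝ) (m : ℕ) : ℝ :=
  if h : 1 ≤ m ∧ m ≤ n then a ⟨m - 1, by omega⟩ else 0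

/-! The exponential terms of the `q`-system are exactly the Volterra variables, the omitted
ones being `a₀ = a_N = 0`. Hence `ȧ_i = a_i (q̇_i - q̇_{i+1})
= a_i ((-a_{i-1} - a_i) - (-a_i - a_{i+1}))`, in which `a_i` cancels. -/

theorem Eterm_eq_ext1 {N : ℕ} (q : Fin N → ℝ) (a : Fin (N - 1) → ℝ)
    (ha : ∀ i : Fin (N - 1), a i = Real.exp (q ⟨i.val, by omega⟩ - q ⟨i.val + 1, by omega⟩))
    (m : ℕ) : Eterm N q m = ext1 (N - 1) a m := by
  unfold Eterm ext1
  by_cases hm : 1 ≤ m ∧ m < N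
  · rw [dif_pos hm, dif_pos (by omega), ha]
    congr 3
    simp only [Fin.mk.injEq]
    omega
  · rw [dif_neg hm, dif_neg (by omega)]

/-- If `q : ℝ → ℝ^N` solves `q̇_i = -e^{q_{i-1}-q_i} - e^{q_i-q_{i+1}}` (undefined
terms omitted), then `a_i = e^{q_i - q_{i+1}}` (`i = 1,…,N-1`) solves the Volterra
(KM) system `ȧ_i = a_i (a_{i+1} - a_{i-1})` with `a₀ = a_N = 0`. -/
theorem stmt6 (N : ℕ) (q : ℝ → Fin N → ℝ)
    (hq : ∀ (t : ℝ) (i : Fin N),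
      HasDerivAt (fun s => q s i) (-(Eterm N (q t) i.val) - Eterm N (q t) (i.val + 1)) t)
    (a : ℝ → Fin (N-1) → ℝ)
    (ha : ∀ (t : ℝ) (i : Fin (N-1)),
      a t i = Real.exp (q t ⟨i.val, by have := i.isLt; omega⟩ -
        q t ⟨i.val + 1, by have := i.isLt; omega⟩)) :
    ∀ (t : ℝ) (i : Fin (N-1)),
      HasDerivAt (fun s => a s i)
        (a t i * (ext1 (N-1) (a t) (i.val + 2) - ext1 (N-1) (a t) i.val)) t := by
  intro t i
  let E := Eterm N (q t)
  have hexp : HasDerivAt (fun s => a s i)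
      (a t i * ((-E i - E (i + 1)) - (-E (i + 1) - E (i + 2)))) t := by
    rw [funext fun s => ha s i, ha t i]
    exact ((hq t ⟨i, by omega⟩).sub (hq t ⟨i + 1, by omega⟩)).exp
  convert hexp using 2
  simp only [E, Eterm_eq_ext1 (q t) (a t) (ha t)]
  ring
end

section
/- Let n ≥ 1, k ≥ 1, and let L, B : ℝ → Matrix n n ℝ be differentiable matrix-valued functions satisfying the Lax equation L'(t) = B(t)·L(t) − L(t)·B(t) for all t. Then the function t ↦ trace((L(t))^k) is constant on ℝ. -/
/-!
Differentiating `L ^ k` by the Leibniz rule and using that `X ↦ B X - X B` is a derivation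
gives `(L ^ k)' = B L ^ k - L ^ k B`, a commutator, which has trace zero. So `trace (L ^ k)` has
zero derivative everywhere and is constant.
-/

open Matrix

section

variable {𝕜 : Type*} [NontriviallyNormedField 𝕜] {m n p : Type*}

theorem hasDerivAt_matrix_mul_apply [Fintype n] {M : 𝕜 → Matrix m n 𝕜} {N : 𝕜 → Matrix n p 𝕜}
    {M' : Matrix m n 𝕜} {N' : Matrix n p 𝕜} {t : 𝕜}
    (hM : ∀ i j, HasDerivAt (fun s => M s i j) (M' i j) t)
    (hN : ∀ i j, HasDerivAt (fun s => N s i j) (N' i j) t) (i : m) (j : p) :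
    HasDerivAt (fun s => (M s * N s) i j) ((M' * N t + M t * N') i j) t := by
  simp only [Matrix.add_apply, mul_apply, ← Finset.sum_add_distrib]
  exact HasDerivAt.fun_sum fun l _ => (hM i l).fun_mul (hN l j)

theorem hasDerivAt_pow_apply_of_lax [Fintype n] [DecidableEq n] {L : 𝕜 → Matrix n n 𝕜}
    {B : Matrix n n 𝕜} {t : 𝕜}
    (hL : ∀ i j, HasDerivAt (fun s => L s i j) ((B * L t - L t * B) i j) t) (k : ℕ) (i j : n) :
    HasDerivAt (fun s => (L s ^ k) i j) ((B * L t ^ k - L t ^ k * B) i j) t := by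
  induction k generalizing i j with
  | zero => simpa using hasDerivAt_const t ((1 : Matrix n n 𝕜) i j)
  | succ k ih =>
    have hleibniz : (B * L t - L t * B) * L t ^ k + L t * (B * L t ^ k - L t ^ k * B)
        = B * (L t * L t ^ k) - L t * L t ^ k * B := by
      noncomm_ring
    simp only [pow_succ' (L _)]
    exact hleibniz ▸ hasDerivAt_matrix_mul_apply hL ih i j

theorem hasDerivAt_matrix_trace [Fintype n] {M : 𝕜 → Matrix n n 𝕜} {M' : Matrix n n 𝕜} {t : 𝕜}
    (hM : ∀ i, HasDerivAt (fun s => M s i i) (M' i i) t) :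
    HasDerivAt (fun s => (M s).trace) M'.trace t :=
  HasDerivAt.fun_sum fun i _ => hM i

theorem hasDerivAt_trace_pow_of_lax [Fintype n] [DecidableEq n] {L : 𝕜 → Matrix n n 𝕜}
    {B : Matrix n n 𝕜} {t : 𝕜}
    (hL : ∀ i j, HasDerivAt (fun s => L s i j) ((B * L t - L t * B) i j) t) (k : ℕ) :
    HasDerivAt (fun s => (L s ^ k).trace) 0 t := by
  have htrace := hasDerivAt_matrix_trace fun i => hasDerivAt_pow_apply_of_lax hL k i i
  rwa [trace_sub, trace_mul_comm, sub_self] at htrace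

end

theorem stmt16_general (n k : ℕ)
    (L B : ℝ → Matrix (Fin n) (Fin n) ℝ)
    (hLax : ∀ (t : ℝ) (i j : Fin n),
      HasDerivAt (fun s => L s i j) ((B t * L t - L t * B t) i j) t) :
    ∀ s t : ℝ, ((L s)^k).trace = ((L t)^k).trace := by
  have hderiv t := hasDerivAt_trace_pow_of_lax (hLax t) k
  exact is_const_of_deriv_eq_zero (fun t => (hderiv t).differentiableAt) fun t => (hderiv t).deriv

/-- If `L(t), B(t)` satisfy the Lax equation `L' = BL - LB` (entrywise derivative),
then `trace(L(t)^k)` is constant. -/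
theorem stmt16 (n k : ℕ) (hn : 1 ≤ n) (hk : 1 ≤ k)
    (L B : ℝ → Matrix (Fin n) (Fin n) ℝ)
    (hLax : ∀ (t : ℝ) (i j : Fin n),
      HasDerivAt (fun s => L s i j) ((B t * L t - L t * B t) i j) t) :
    ∀ s t : ℝ, ((L s)^k).trace = ((L t)^k).trace :=
  stmt16_general n k L B hLax
end

section
/- Let n ≥ 1 and let a₁,…,a_{2n+1} : ℝ → ℝ be differentiable functions satisfying the Volterra (KM) system ȧ_i = a_i (a_{i+1} − a_{i-1}) for i = 1,…,2n+1 (with the convention a₀ = a_{2n+2} = 0), and assume a_i(t) > 0 for all i and t. Define A_i(t) = −(1/2)·√(a_{2i}(t)·a_{2i-1}(t)) for i = 1,…,n, and B_i(t) = (1/2)·(a_{2i-1}(t) + a_{2i-2}(t)) for i = 1,…,n+1 (with a₀ = 0). Then (A, B) satisfies the Toda lattice equations in Flaschka form: Ȧ_i = A_i (B_{i+1} − B_i) for i = 1,…,n, and Ḃ_i = 2(A_i² − A_{i-1}²) for i = 1,…,n+1, with the convention A₀ = A_{n+1} = 0. -/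
/-!
Both Toda equations follow from the Volterra equations by the chain rule. The logarithmic
derivative of `√(a_{2i} a_{2i-1})` is the mean of those of `a_{2i}` and `a_{2i-1}`, namely
`(a_{2i+1} - a_{2i-1} + a_{2i} - a_{2i-2}) / 2 = B_{i+1} - B_i`. For `B_i` the cross terms cancel,
`Ḃ_i = (a_{2i} a_{2i-1} - a_{2i-2} a_{2i-3}) / 2`, and `A_i² = a_{2i} a_{2i-1} / 4`; extending
`a` and `A` by zero makes the same computation valid at the boundary indices.
-/

open Real

section ext1

variable {n : ℕ} (a : Fin n → ℝ)

lemma ext1_succ {j : ℕ} (h : j < n) : ext1 n a (j + 1) = a ⟨j, h⟩ :=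
  dif_pos ⟨by omega, h⟩

lemma ext1_eq_zero {m : ℕ} (h : ¬(1 ≤ m ∧ m ≤ n)) : ext1 n a m = 0 :=
  dif_neg h

@[simp]
lemma ext1_zero : ext1 n a 0 = 0 :=
  ext1_eq_zero a (by omega)

end ext1

theorem hasDerivAt_ext1_of_volterra {N : ℕ} {a : ℝ → Fin N → ℝ}
    (hKM : ∀ (t : ℝ) (i : Fin N),
      HasDerivAt (fun s => a s i) (a t i * (ext1 N (a t) (i.val + 2) - ext1 N (a t) i.val)) t)
    (t : ℝ) (m : ℕ) :
    HasDerivAt (fun s => ext1 N (a s) m)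
      (ext1 N (a t) m * (ext1 N (a t) (m + 1) - ext1 N (a t) (m - 1))) t := by
  rcases m with _ | j
  · simpa using hasDerivAt_const t (0 : ℝ)
  by_cases hj : j < N
  · simp only [ext1_succ _ hj]
    exact hKM t ⟨j, hj⟩
  · simp only [ext1_eq_zero _ (show ¬(1 ≤ j + 1 ∧ j + 1 ≤ N) by omega), zero_mul]
    exact hasDerivAt_const t 0

theorem HasDerivAt.sqrt_mul_of_pos {u v : ℝ → ℝ} {p q t : ℝ}
    (hu : HasDerivAt u (u t * p) t) (hv : HasDerivAt v (v t * q) t)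
    (hu0 : 0 < u t) (hv0 : 0 < v t) :
    HasDerivAt (fun s => √(u s * v s)) (√(u t * v t) * ((p + q) / 2)) t := by
  have hsqrt : √(u t * v t) ≠ 0 := by positivity
  refine ((hu.mul hv).sqrt (mul_pos hu0 hv0).ne').congr_deriv ?_
  field_simp
  rw [Pi.mul_apply, mul_assoc _ √_, mul_self_sqrt (mul_pos hu0 hv0).le]
  ring

lemma sq_ext1_of_henon {n : ℕ} (a : Fin (2 * n + 1) → ℝ) (ha : ∀ i, 0 ≤ a i) (A : Fin n → ℝ)
    (hA : ∀ i : Fin n, A i = -(1/2) * √(a ⟨2 * i.val + 1, by omega⟩ * a ⟨2 * i.val, by omega⟩))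
    (m : ℕ) :
    ext1 n A m ^ 2 = ext1 (2 * n + 1) a (2 * m) * ext1 (2 * n + 1) a (2 * m - 1) / 4 := by
  rcases m with _ | k
  · simp
  rw [show 2 * (k + 1) = 2 * k + 1 + 1 by ring, Nat.add_sub_cancel]
  by_cases hk : k < n
  · rw [ext1_succ _ hk, ext1_succ _ (by omega), ext1_succ _ (by omega), hA, mul_pow,
      sq_sqrt (mul_nonneg (ha _) (ha _))]
    ring
  · rw [ext1_eq_zero _ (by omega), ext1_eq_zero (m := 2 * k + 1 + 1) _ (by omega)]
    ring

/-- The Hénon transformation `A_i = -(1/2)√(a_{2i} a_{2i-1})`,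
`B_i = (1/2)(a_{2i-1} + a_{2i-2})` maps positive solutions of the Volterra (KM)
system `ȧ_i = a_i(a_{i+1} - a_{i-1})` on `ℝ^{2n+1}` (with `a₀ = a_{2n+2} = 0`)
to solutions of the Toda lattice in Flaschka form
`Ȧ_i = A_i(B_{i+1} - B_i)`, `Ḃ_i = 2(A_i² - A_{i-1}²)` (with `A₀ = A_{n+1} = 0`). -/
theorem stmt17 (n : ℕ) (a : ℝ → Fin (2*n+1) → ℝ)
    (hpos : ∀ (t : ℝ) (i : Fin (2*n+1)), 0 < a t i)
    (hKM : ∀ (t : ℝ) (i : Fin (2*n+1)),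
      HasDerivAt (fun s => a s i)
        (a t i * (ext1 (2*n+1) (a t) (i.val + 2) - ext1 (2*n+1) (a t) i.val)) t)
    (A : ℝ → Fin n → ℝ) (Bv : ℝ → Fin (n+1) → ℝ)
    (hA : ∀ (t : ℝ) (i : Fin n),
      A t i = -(1/2) * Real.sqrt
        (a t ⟨2*i.val + 1, by have := i.isLt; omega⟩ *
         a t ⟨2*i.val, by have := i.isLt; omega⟩))
    (hB : ∀ (t : ℝ) (i : Fin (n+1)),
      Bv t i = (1/2) * (ext1 (2*n+1) (a t) (2*i.val + 1) + ext1 (2*n+1) (a t) (2*i.val))) :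
    (∀ (t : ℝ) (i : Fin n),
      HasDerivAt (fun s => A s i)
        (A t i * (Bv t ⟨i.val + 1, by have := i.isLt; omega⟩ -
          Bv t ⟨i.val, by have := i.isLt; omega⟩)) t)
    ∧ (∀ (t : ℝ) (i : Fin (n+1)),
      HasDerivAt (fun s => Bv s i)
        (2 * ((ext1 n (A t) (i.val + 1))^2 - (ext1 n (A t) i.val)^2)) t) := by
  refine ⟨fun t i => ?_, fun t i => ?_⟩
  · have hi := i.isLt
    have hroot := (HasDerivAt.sqrt_mul_of_pos (hKM t ⟨2 * i + 1, by omega⟩) (hKM t ⟨2 * i, by omega⟩)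
      (hpos _ _) (hpos _ _)).const_mul (-(1/2) : ℝ)
    rw [show (fun s => A s i) = _ from funext (hA · i)]
    refine hroot.congr_deriv ?_
    have e₁ : ext1 (2 * n + 1) (a t) (2 * i + 2) = a t ⟨2 * i + 1, by omega⟩ := ext1_succ _ _
    have e₀ : ext1 (2 * n + 1) (a t) (2 * i + 1) = a t ⟨2 * i, by omega⟩ := ext1_succ _ _
    rw [hA t i, hB, hB]
    simp only [show 2 * (i.val + 1) = 2 * i + 2 by ring, e₀, e₁]
    ring
  · have hsum := ((hasDerivAt_ext1_of_volterra hKM t (2 * i + 1)).add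
      (hasDerivAt_ext1_of_volterra hKM t (2 * i))).const_mul (1/2 : ℝ)
    rw [show (fun s => Bv s i) = _ from funext (hB · i)]
    refine hsum.congr_deriv ?_
    rw [sq_ext1_of_henon (a t) (fun j => (hpos t j).le) (A t) (hA t),
      sq_ext1_of_henon (a t) (fun j => (hpos t j).le) (A t) (hA t),
      show 2 * (i.val + 1) = 2 * i + 1 + 1 by ring]
    simp only [Nat.add_sub_cancel]
    ring
end

section
/- Let λ₁, λ₂ be distinct real numbers and c₁, c₂ > 0. Define r_i(t) = c_i e^{−λ_i t} for i = 1, 2, and set u(t) = r₁(t)², v(t) = r₂(t)², and define α(t) = u v (λ₂ − λ₁)² / (u + v)² (this is a₁²), b₁(t) = (u λ₂ + v λ₁)/(u + v), b₂(t) = (u λ₁ + v λ₂)/(u + v) (the Stieltjes/Moser formulas for N = 2). Then these functions satisfy the A₂ Toda lattice equations: α̇ = 2 α (b₂ − b₁), ḃ₁ = 2α, and ḃ₂ = −2α. -/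
open Real

/-!
The residues `r_i = c_i e^{-λ_i t}` make `u = r₁²` and `v = r₂²` solve the decoupled linear
system `u̇ = -2λ₁u`, `v̇ = -2λ₂v`. Differentiating the Stieltjes/Moser formulas by the quotient
rule, every derivative collapses to a multiple of `u v (λ₂ - λ₁) / (u + v)²`, which is exactly
what the Toda equations ask for.
-/

namespace MoserToda

noncomputable section

def alpha (l1 l2 u v : ℝ) : ℝ := u * v * (l2 - l1) ^ 2 / (u + v) ^ 2

def b1 (l1 l2 u v : ℝ) : ℝ := (u * l2 + v * l1) / (u + v)

def b2 (l1 l2 u v : ℝ) : ℝ := (u * l1 + v * l2) / (u + v)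

theorem hasDerivAt_sq_const_mul_exp (c l t : ℝ) :
    HasDerivAt (fun s => (c * exp (-l * s)) ^ 2) (-2 * l * (c * exp (-l * t)) ^ 2) t := by
  refine ((((hasDerivAt_id' t).const_mul (-l)).exp.const_mul c).fun_pow 2).congr_deriv ?_
  ring

section

variable {u v : ℝ → ℝ} {l1 l2 t : ℝ}
  (hu : HasDerivAt u (-2 * l1 * u t) t) (hv : HasDerivAt v (-2 * l2 * v t) t)
  (huv : u t + v t ≠ 0)
include hu hv huv

theorem hasDerivAt_alpha :
    HasDerivAt (fun s => alpha l1 l2 (u s) (v s))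
      (2 * alpha l1 l2 (u t) (v t) * (b2 l1 l2 (u t) (v t) - b1 l1 l2 (u t) (v t))) t := by
  refine (((hu.fun_mul hv).mul_const _).fun_div ((hu.fun_add hv).fun_pow 2)
    (pow_ne_zero 2 huv)).congr_deriv ?_
  simp only [alpha, b1, b2]
  field_simp
  ring

theorem hasDerivAt_b1 :
    HasDerivAt (fun s => b1 l1 l2 (u s) (v s)) (2 * alpha l1 l2 (u t) (v t)) t := by
  have h := ((hu.mul_const l2).fun_add (hv.mul_const l1)).fun_div (hu.fun_add hv) huv
  refine h.congr_deriv ?_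
  simp only [alpha]
  field_simp
  ring

theorem hasDerivAt_b2 :
    HasDerivAt (fun s => b2 l1 l2 (u s) (v s)) (-(2 * alpha l1 l2 (u t) (v t))) t := by
  have h := ((hu.mul_const l1).fun_add (hv.mul_const l2)).fun_div (hu.fun_add hv) huv
  refine h.congr_deriv ?_
  simp only [alpha]
  field_simp
  ring

end

end

end MoserToda

open MoserToda in
theorem stmt19_general (lam1 lam2 c1 c2 : ℝ) (hc1 : 0 < c1)
    (u v α b1 b2 : ℝ → ℝ)
    (hu : ∀ t, u t = (c1 * Real.exp (-lam1 * t))^2)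
    (hv : ∀ t, v t = (c2 * Real.exp (-lam2 * t))^2)
    (hα : ∀ t, α t = u t * v t * (lam2 - lam1)^2 / (u t + v t)^2)
    (hb1 : ∀ t, b1 t = (u t * lam2 + v t * lam1) / (u t + v t))
    (hb2 : ∀ t, b2 t = (u t * lam1 + v t * lam2) / (u t + v t)) :
    ∀ t : ℝ,
      HasDerivAt α (2 * α t * (b2 t - b1 t)) t
      ∧ HasDerivAt b1 (2 * α t) t
      ∧ HasDerivAt b2 (-(2 * α t)) t := by
  intro t
  obtain rfl : u = fun s => (c1 * exp (-lam1 * s)) ^ 2 := funext hu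
  obtain rfl : v = fun s => (c2 * exp (-lam2 * s)) ^ 2 := funext hv
  obtain rfl : α = fun s => alpha lam1 lam2 _ _ := funext hα
  obtain rfl : b1 = fun s => MoserToda.b1 lam1 lam2 _ _ := funext hb1
  obtain rfl : b2 = fun s => MoserToda.b2 lam1 lam2 _ _ := funext hb2
  have hu' := hasDerivAt_sq_const_mul_exp c1 lam1 t
  have hv' := hasDerivAt_sq_const_mul_exp c2 lam2 t
  have huv : (c1 * exp (-lam1 * t)) ^ 2 + (c2 * exp (-lam2 * t)) ^ 2 ≠ 0 := by positivity
  exact ⟨hasDerivAt_alpha hu' hv' huv, hasDerivAt_b1 hu' hv' huv, hasDerivAt_b2 hu' hv' huv⟩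

/-- Moser's solution of the `N = 2` open Toda lattice via the Stieltjes formulas:
with `r_i(t) = c_i e^{-λ_i t}`, `u = r₁²`, `v = r₂²`,
`α = u v (λ₂-λ₁)²/(u+v)²` (this is `a₁²`), `b₁ = (u λ₂ + v λ₁)/(u+v)`,
`b₂ = (u λ₁ + v λ₂)/(u+v)`, these satisfy the `A₂` Toda equations
`α̇ = 2α(b₂ - b₁)`, `ḃ₁ = 2α`, `ḃ₂ = -2α`. -/
theorem stmt19 (lam1 lam2 c1 c2 : ℝ) (hlam : lam1 ≠ lam2) (hc1 : 0 < c1) (hc2 : 0 < c2)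
    (u v α b1 b2 : ℝ → ℝ)
    (hu : ∀ t, u t = (c1 * Real.exp (-lam1 * t))^2)
    (hv : ∀ t, v t = (c2 * Real.exp (-lam2 * t))^2)
    (hα : ∀ t, α t = u t * v t * (lam2 - lam1)^2 / (u t + v t)^2)
    (hb1 : ∀ t, b1 t = (u t * lam2 + v t * lam1) / (u t + v t))
    (hb2 : ∀ t, b2 t = (u t * lam1 + v t * lam2) / (u t + v t)) :
    ∀ t : ℝ,
      HasDerivAt α (2 * α t * (b2 t - b1 t)) t
      ∧ HasDerivAt b1 (2 * α t) t
      ∧ HasDerivAt b2 (-(2 * α t)) t :=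
  stmt19_general lam1 lam2 c1 c2 hc1 u v α b1 b2 hu hv hα hb1 hb2
end
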